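/- Let f : M → M' be an injective R-module homomorphism. If N is a strongly 2-absorbing second submodule of M, then f(N) is a 2-absorbing second submodule of M'. -/

import Mathlib

open Pointwise

/-- A proper submodule `L` is completely irreducible if whenever `L` is the
intersection of a family of submodules, it equals one of them. -/
def IsCompletelyIrreducible {R M : Type*} [CommRing R] [AddCommGroup M] [Module R M]
    (L : Submodule R M) : Prop :=
  L ≠ ⊤ ∧ ∀ S : Set (Submodule R M), L = sInf S → L ∈ S

/-- A nonzero submodule `N` is 2-absorbing second if whenever `a b : R`, `L` is a
completely irreducible submodule, and `a • b • N ⊆ L`, then `a • N ⊆ L` or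
`b • N ⊆ L` or `a * b ∈ Ann(N)`. -/
def Is2AbsorbingSecond {R M : Type*} [CommRing R] [AddCommGroup M] [Module R M]
    (N : Submodule R M) : Prop :=
  N ≠ ⊥ ∧ ∀ (a b : R) (L : Submodule R M), IsCompletelyIrreducible L →
    a • b • N ≤ L → a • N ≤ L ∨ b • N ≤ L ∨ a * b ∈ N.annihilator

/-- A nonzero submodule `N` is strongly 2-absorbing second: whenever `a b : R` and
`K` is a submodule with `a • b • N ⊆ K`, then `a • N ⊆ K` or `b • N ⊆ K` or
`a • b • N = 0`. -/
def IsStrongly2AbsorbingSecond {R M : Type*} [CommRing R] [AddCommGroup M] [Module R M]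
    (N : Submodule R M) : Prop :=
  N ≠ ⊥ ∧ ∀ (a b : R) (K : Submodule R M), a • b • N ≤ K →
    a • N ≤ K ∨ b • N ≤ K ∨ a • b • N = ⊥

namespace Submodule

theorem pointwise_smul_eq_bot_iff_mem_annihilator {R M : Type*} [CommSemiring R]
    [AddCommMonoid M] [Module R M] {r : R} {N : Submodule R M} :
    r • N = ⊥ ↔ r ∈ N.annihilator := by
  rw [← ideal_span_singleton_smul, ← le_annihilator_iff, Ideal.span_singleton_le_iff_mem]

end Submodule

section

variable {R M M' : Type*} [CommRing R] [AddCommGroup M] [Module R M]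
  [AddCommGroup M'] [Module R M'] {N : Submodule R M}

theorem IsStrongly2AbsorbingSecond.is2AbsorbingSecond (hN : IsStrongly2AbsorbingSecond N) :
    Is2AbsorbingSecond N := by
  refine ⟨hN.1, fun a b L _ habL => ?_⟩
  rcases hN.2 a b L habL with haL | hbL | habN
  · exact .inl haL
  · exact .inr (.inl hbL)
  · rw [smul_smul] at habN
    exact .inr (.inr (Submodule.pointwise_smul_eq_bot_iff_mem_annihilator.mp habN))

theorem IsStrongly2AbsorbingSecond.map (hN : IsStrongly2AbsorbingSecond N) {f : M →ₗ[R] M'}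
    (hf : Function.Injective f) : IsStrongly2AbsorbingSecond (N.map f) := by
  obtain ⟨hN0, hN2⟩ := hN
  refine ⟨fun hfN => hN0 <| Submodule.map_injective_of_injective hf <| by
    rw [hfN, Submodule.map_bot], fun a b K habK => ?_⟩
  simp only [← Submodule.map_pointwise_smul, Submodule.map_le_iff_le_comap] at habK ⊢
  rcases hN2 a b (K.comap f) habK with haK | hbK | habN
  · exact .inl haK
  · exact .inr (.inl hbK)
  · exact .inr (.inr (by rw [habN, Submodule.map_bot]))

end

theorem map_strongly2AbsorbingSecond
    {R M M' : Type*} [CommRing R] [AddCommGroup M] [Module R M]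
    [AddCommGroup M'] [Module R M']
    (f : M →ₗ[R] M') (hf : Function.Injective f)
    (N : Submodule R M) (hN : IsStrongly2AbsorbingSecond N) :
    Is2AbsorbingSecond (N.map f) :=
  (hN.map hf).is2AbsorbingSecond
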